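/- arXiv:2211.03458 — 4 statements merged into one kernel-verified Lean document; each statement's English description precedes it below -/
import Mathlib

section
/- Let X be a quasi-Banach function space over a σ-finite measure space Ω. If g ∈ L^0(Ω) satisfies fg ∈ L^1(Ω) for every f ∈ X, then sup over f ∈ X with ‖f‖_X = 1 of ‖fg‖_{L^1(Ω)} is finite. -/
/-! If the set were unbounded, pick `fₙ` with `‖fₙ‖ = 1` and `∫ |fₙ g| > (2K)ⁿ (n + 1)`.
The partial sums of `∑ (2K)⁻ⁿ |fₙ|` have quasi-norm at most `2K` by the iterated
quasi-triangle inequality. By saturation and the Fatou property they are bounded almost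
everywhere (otherwise `t ‖χ_F‖ ≤ 2K` for all `t` and some `F` of positive measure), so by
Fatou their supremum `w` lies in `X`. Then `w g` is integrable, yet
`∫ |w g| ≥ (2K)⁻ᴺ ∫ |f_N g| > N + 1` for every `N`. -/

open MeasureTheory ENNReal

/-- A quasi-Banach function space over a measure space `(Ω, μ)`:
a vector subspace of `L⁰(Ω)` with a quasi-norm satisfying the ideal property,
the Fatou property, and saturation. -/
structure QBFS (Ω : Type*) [MeasurableSpace Ω] (μ : Measure Ω) where
  mem : (Ω → ℝ) → Prop
  norm : (Ω → ℝ) → ℝ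
  K : ℝ
  one_le_K : 1 ≤ K
  norm_nonneg : ∀ f, mem f → 0 ≤ norm f
  aestronglyMeasurable : ∀ f, mem f → AEStronglyMeasurable f μ
  add_mem : ∀ f g, mem f → mem g → mem (f + g)
  quasi_triangle : ∀ f g, mem f → mem g → norm (f + g) ≤ K * (norm f + norm g)
  smul_mem : ∀ (c : ℝ) f, mem f → mem (c • f)
  norm_smul : ∀ (c : ℝ) f, mem f → norm (c • f) = |c| * norm f
  norm_eq_zero_iff : ∀ f, mem f → (norm f = 0 ↔ f =ᵐ[μ] 0)
  ideal : ∀ f g, mem f → AEStronglyMeasurable g μ →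
    (∀ᵐ x ∂μ, |g x| ≤ |f x|) → mem g ∧ norm g ≤ norm f
  fatou : ∀ (f : ℕ → Ω → ℝ) (g : Ω → ℝ), (∀ n, mem (f n)) →
    (∀ᵐ x ∂μ, ∀ n, 0 ≤ f n x ∧ f n x ≤ f (n + 1) x) →
    (∀ᵐ x ∂μ, Filter.Tendsto (fun n => f n x) Filter.atTop (nhds (g x))) →
    AEStronglyMeasurable g μ →
    BddAbove (Set.range fun n => norm (f n)) →
    mem g ∧ norm g = ⨆ n, norm (f n)
  saturation : ∀ E : Set Ω, MeasurableSet E → 0 < μ E →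
    ∃ F, F ⊆ E ∧ MeasurableSet F ∧ 0 < μ F ∧ mem (F.indicator fun _ => (1 : ℝ))

/-- Membership in the Köthe dual: `g ∈ X'` iff `fg ∈ L¹(μ)` for all `f ∈ X`. -/
def kMem {Ω : Type*} [MeasurableSpace Ω] (μ : Measure Ω)
    (mem : (Ω → ℝ) → Prop) (g : Ω → ℝ) : Prop :=
  AEStronglyMeasurable g μ ∧ ∀ f, mem f → Integrable (fun x => f x * g x) μ

/-- The Köthe dual seminorm `‖g‖_{X'} = sup_{‖f‖_X = 1} ‖fg‖_{L¹}`. -/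
noncomputable def kNorm {Ω : Type*} [MeasurableSpace Ω] (μ : Measure Ω)
    (mem : (Ω → ℝ) → Prop) (nrm : (Ω → ℝ) → ℝ) (g : Ω → ℝ) : ℝ :=
  sSup {c : ℝ | ∃ f, mem f ∧ nrm f = 1 ∧ c = ∫ x, |f x * g x| ∂μ}

namespace QBFS

variable {Ω : Type*} [MeasurableSpace Ω] {μ : Measure Ω} (X : QBFS Ω μ)

theorem K_pos : 0 < X.K := zero_lt_one.trans_le X.one_le_K

theorem abs_mem {f : Ω → ℝ} (hf : X.mem f) : X.mem fun x => |f x| :=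
  (X.ideal f _ hf (X.aestronglyMeasurable f hf).norm (.of_forall fun _ => (abs_abs _).le)).1

theorem norm_abs_le {f : Ω → ℝ} (hf : X.mem f) : X.norm (fun x => |f x|) ≤ X.norm f :=
  (X.ideal f _ hf (X.aestronglyMeasurable f hf).norm (.of_forall fun _ => (abs_abs _).le)).2

theorem norm_pos {f : Ω → ℝ} (hf : X.mem f) (hf0 : ¬f =ᵐ[μ] 0) : 0 < X.norm f :=
  (X.norm_nonneg f hf).lt_of_ne fun h => hf0 ((X.norm_eq_zero_iff f hf).1 h.symm)

theorem mem_sum_range_and_norm_le (a : ℕ → Ω → ℝ) (ha : ∀ n, X.mem (a n)) (N : ℕ) :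
    X.mem (∑ n ∈ Finset.range (N + 1), a n) ∧
      X.norm (∑ n ∈ Finset.range (N + 1), a n) ≤
        ∑ n ∈ Finset.range (N + 1), X.K ^ (n + 1) * X.norm (a n) := by
  induction N generalizing a with
  | zero =>
    simp only [zero_add, Finset.sum_range_one, pow_one]
    exact ⟨ha 0, le_mul_of_one_le_left (X.norm_nonneg _ (ha 0)) X.one_le_K⟩
  | succ N ih =>
    obtain ⟨hmem, hnorm⟩ := ih (fun n => a (n + 1)) fun n => ha (n + 1)
    rw [Finset.sum_range_succ' a, Finset.sum_range_succ' (fun n => X.K ^ (n + 1) * X.norm (a n))]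
    refine ⟨X.add_mem _ _ hmem (ha 0), ?_⟩
    calc X.norm (∑ n ∈ Finset.range (N + 1), a (n + 1) + a 0)
        ≤ X.K * (X.norm (∑ n ∈ Finset.range (N + 1), a (n + 1)) + X.norm (a 0)) :=
          X.quasi_triangle _ _ hmem (ha 0)
      _ ≤ X.K * (∑ n ∈ Finset.range (N + 1), X.K ^ (n + 1) * X.norm (a (n + 1)) +
            X.norm (a 0)) := by
          gcongr
          exact X.K_pos.le
      _ = _ := by
          rw [mul_add, Finset.mul_sum]
          congr 1
          · exact Finset.sum_congr rfl fun n _ => by ring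
          · ring

theorem norm_sum_range_le_of_norm_le_pow {a : ℕ → Ω → ℝ} (ha : ∀ n, X.mem (a n))
    (hna : ∀ n, X.norm (a n) ≤ (2 * X.K)⁻¹ ^ n) (N : ℕ) :
    X.norm (∑ n ∈ Finset.range (N + 1), a n) ≤ 2 * X.K := by
  have hK := X.K_pos
  calc X.norm (∑ n ∈ Finset.range (N + 1), a n)
      ≤ ∑ n ∈ Finset.range (N + 1), X.K ^ (n + 1) * X.norm (a n) :=
        (X.mem_sum_range_and_norm_le a ha N).2
    _ ≤ ∑ n ∈ Finset.range (N + 1), X.K * (1 / 2) ^ n := by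
        refine Finset.sum_le_sum fun n _ => ?_
        calc X.K ^ (n + 1) * X.norm (a n) ≤ X.K ^ (n + 1) * (2 * X.K)⁻¹ ^ n := by
              gcongr; exact hna n
          _ = X.K * (1 / 2) ^ n := by rw [pow_succ, mul_inv, mul_pow, inv_pow X.K]; field_simp
    _ = X.K * ∑ n ∈ Finset.range (N + 1), (1 / 2 : ℝ) ^ n := (Finset.mul_sum ..).symm
    _ ≤ X.K * 2 := by gcongr; exact sum_geometric_two_le _
    _ = 2 * X.K := mul_comm _ _

theorem mem_and_norm_le_of_tendsto {h : ℕ → Ω → ℝ} {w : Ω → ℝ} {C : ℝ}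
    (hmem : ∀ n, X.mem (h n))
    (hmono : ∀ᵐ x ∂μ, ∀ n, 0 ≤ h n x ∧ h n x ≤ h (n + 1) x)
    (hlim : ∀ᵐ x ∂μ, Filter.Tendsto (fun n => h n x) Filter.atTop (nhds (w x)))
    (hw : AEStronglyMeasurable w μ) (hC : ∀ n, X.norm (h n) ≤ C) :
    X.mem w ∧ X.norm w ≤ C := by
  obtain ⟨hw_mem, hw_norm⟩ := X.fatou h w hmem hmono hlim hw ⟨C, Set.forall_mem_range.2 hC⟩
  exact ⟨hw_mem, hw_norm ▸ ciSup_le hC⟩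

theorem mem_and_norm_le_of_ae_exists_le {h : ℕ → Ω → ℝ} {w : Ω → ℝ} {C : ℝ}
    (hmem : ∀ n, X.mem (h n)) (hnonneg : ∀ n x, 0 ≤ h n x) (hmono : ∀ x, Monotone (h · x))
    (hC : ∀ n, X.norm (h n) ≤ C) (hw : AEStronglyMeasurable w μ) (hw0 : ∀ x, 0 ≤ w x)
    (hdom : ∀ᵐ x ∂μ, ∃ n, w x ≤ h n x) :
    X.mem w ∧ X.norm w ≤ C := by
  set v : ℕ → Ω → ℝ := fun n x => min (h n x) (w x)
  have hv : ∀ n, X.mem (v n) ∧ X.norm (v n) ≤ X.norm (h n) := fun n =>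
    X.ideal (h n) (v n) (hmem n) ((X.aestronglyMeasurable _ (hmem n)).inf hw) <|
      .of_forall fun x => by
      rw [abs_of_nonneg (le_min (hnonneg n x) (hw0 x)), abs_of_nonneg (hnonneg n x)]
      exact min_le_left _ _
  refine X.mem_and_norm_le_of_tendsto (fun n => (hv n).1)
    (.of_forall fun x n =>
      ⟨le_min (hnonneg n x) (hw0 x), min_le_min_right _ (hmono x n.le_succ)⟩)
    ?_ hw fun n => (hv n).2.trans (hC n)
  filter_upwards [hdom] with x ⟨n₀, hn₀⟩
  exact tendsto_atTop_of_eventually_const (i₀ := n₀) fun n hn =>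
    min_eq_right (hn₀.trans (hmono x hn))

theorem ae_bddAbove_of_norm_le {h : ℕ → Ω → ℝ} {C : ℝ} (hmem : ∀ n, X.mem (h n))
    (hnonneg : ∀ n x, 0 ≤ h n x) (hmono : ∀ x, Monotone (h · x))
    (hC : ∀ n, X.norm (h n) ≤ C) :
    ∀ᵐ x ∂μ, BddAbove (Set.range fun n => h n x) := by
  choose h' hh'_meas hh' using fun n => (X.aestronglyMeasurable _ (hmem n)).aemeasurable
  have hh'_ae : ∀ᵐ x ∂μ, ∀ n, h n x = h' n x := ae_all_iff.2 hh'
  set E := {x | BddAbove (Set.range fun n => h' n x)}ᶜ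
  suffices μ E = 0 by
    filter_upwards [hh'_ae, measure_eq_zero_iff_ae_notMem.1 this] with x hx hxE
    simpa [E, hx] using hxE
  by_contra hE
  obtain ⟨F, hFE, -, hF, hχ_mem⟩ :=
    X.saturation E (measurableSet_bddAbove_range hh'_meas).compl (pos_iff_ne_zero.2 hE)
  set χ := F.indicator fun _ => (1 : ℝ)
  have hχ_pos : 0 < X.norm χ := X.norm_pos hχ_mem <| by
    rw [Set.indicator_ae_eq_zero, Function.support_const one_ne_zero, Set.inter_univ]
    exact hF.ne'
  have hbound : ∀ t, 0 ≤ t → t * X.norm χ ≤ C := fun t ht => by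
    have hdom : ∀ᵐ x ∂μ, ∃ n, (t • χ) x ≤ h n x := by
      filter_upwards [hh'_ae] with x hx
      by_cases hxF : x ∈ F
      · obtain ⟨_, ⟨n, rfl⟩, hn⟩ := not_bddAbove_iff.1 (hFE hxF) ((t • χ) x)
        exact ⟨n, hx n ▸ hn.le⟩
      · exact ⟨0, by simp [χ, hxF, hnonneg]⟩
    have hχ_nonneg : ∀ x, 0 ≤ (t • χ) x := fun x =>
      mul_nonneg ht (Set.indicator_nonneg (fun _ _ => zero_le_one) x)
    have := (X.mem_and_norm_le_of_ae_exists_le hmem hnonneg hmono hC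
      (X.aestronglyMeasurable _ (X.smul_mem t χ hχ_mem)) hχ_nonneg hdom).2
    rwa [X.norm_smul t χ hχ_mem, abs_of_nonneg ht] at this
  have := hbound ((|C| + 1) / X.norm χ) (by positivity)
  rw [div_mul_cancel₀ _ hχ_pos.ne'] at this
  linarith [le_abs_self C]

theorem exists_mem_ae_le_of_monotone {h : ℕ → Ω → ℝ} {C : ℝ} (hmem : ∀ n, X.mem (h n))
    (hnonneg : ∀ n x, 0 ≤ h n x) (hmono : ∀ x, Monotone (h · x))
    (hC : ∀ n, X.norm (h n) ≤ C) :
    ∃ w, X.mem w ∧ ∀ᵐ x ∂μ, ∀ n, h n x ≤ w x := by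
  have hbdd := X.ae_bddAbove_of_norm_le hmem hnonneg hmono hC
  have hlim :
      ∀ᵐ x ∂μ, Filter.Tendsto (fun n => h n x) Filter.atTop (nhds (⨆ n, h n x)) := by
    filter_upwards [hbdd] with x hx using tendsto_atTop_ciSup (hmono x) hx
  refine ⟨fun x => ⨆ n, h n x, (X.mem_and_norm_le_of_tendsto hmem
    (.of_forall fun x n => ⟨hnonneg n x, hmono x n.le_succ⟩) hlim
    (aestronglyMeasurable_of_tendsto_ae _ (fun n => X.aestronglyMeasurable _ (hmem n)) hlim)
    hC).1, ?_⟩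
  filter_upwards [hbdd] with x hx n using le_ciSup hx n

theorem exists_mem_ae_le_of_norm_le_pow {a : ℕ → Ω → ℝ} (ha : ∀ n, X.mem (a n))
    (ha0 : ∀ n x, 0 ≤ a n x) (hna : ∀ n, X.norm (a n) ≤ (2 * X.K)⁻¹ ^ n) :
    ∃ w, X.mem w ∧ ∀ᵐ x ∂μ, ∀ n, a n x ≤ w x := by
  set s : ℕ → Ω → ℝ := fun N => ∑ n ∈ Finset.range (N + 1), a n
  have hs : ∀ N x, s N x = ∑ n ∈ Finset.range (N + 1), a n x := fun N x => Finset.sum_apply ..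
  obtain ⟨w, hw_mem, hw⟩ := X.exists_mem_ae_le_of_monotone (h := s)
    (fun N => (X.mem_sum_range_and_norm_le a ha N).1)
    (fun N x => hs N x ▸ Finset.sum_nonneg fun n _ => ha0 n x)
    (fun x M N hMN => by
      simp only [hs]
      exact Finset.sum_le_sum_of_subset_of_nonneg (Finset.range_mono (by omega))
        fun n _ _ => ha0 n x)
    (X.norm_sum_range_le_of_norm_le_pow ha hna)
  refine ⟨w, hw_mem, ?_⟩
  filter_upwards [hw] with x hx n
  calc a n x ≤ s n x :=
        hs n x ▸ Finset.single_le_sum (fun k _ => ha0 k x) (Finset.self_mem_range_succ n)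
    _ ≤ w x := hx n

end QBFS

theorem statement1_general {Ω : Type*} [MeasurableSpace Ω] {μ : Measure Ω}
    (X : QBFS Ω μ) (g : Ω → ℝ)
    (h : ∀ f, X.mem f → Integrable (fun x => f x * g x) μ) :
    BddAbove {c : ℝ | ∃ f, X.mem f ∧ X.norm f = 1 ∧ c = ∫ x, |f x * g x| ∂μ} := by
  by_contra hbdd
  set r := (2 * X.K)⁻¹
  have hr : 0 < r := by have := X.K_pos; positivity
  obtain ⟨f, hf_mem, hf_norm, hf_int⟩ : ∃ f : ℕ → Ω → ℝ, (∀ n, X.mem (f n)) ∧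
      (∀ n, X.norm (f n) = 1) ∧ ∀ n : ℕ, (n + 1) / r ^ n < ∫ x, |f n x * g x| ∂μ := by
    choose c hc hlt using fun n : ℕ => not_bddAbove_iff.1 hbdd ((n + 1) / r ^ n)
    choose f hf_mem hf_norm hc_eq using hc
    exact ⟨f, hf_mem, hf_norm, fun n => hc_eq n ▸ hlt n⟩
  set a : ℕ → Ω → ℝ := fun n => r ^ n • fun x => |f n x|
  have ha_mem : ∀ n, X.mem (a n) := fun n => X.smul_mem _ _ (X.abs_mem (hf_mem n))
  have ha_norm : ∀ n, X.norm (a n) ≤ r ^ n := fun n => by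
    rw [X.norm_smul _ _ (X.abs_mem (hf_mem n)), abs_of_pos (pow_pos hr n)]
    exact mul_le_of_le_one_right (pow_pos hr n).le (hf_norm n ▸ X.norm_abs_le (hf_mem n))
  have ha_nonneg : ∀ n x, 0 ≤ a n x := fun n x => mul_nonneg (pow_pos hr n).le (abs_nonneg _)
  obtain ⟨w, hw_mem, hw⟩ := X.exists_mem_ae_le_of_norm_le_pow ha_mem ha_nonneg ha_norm
  obtain ⟨N, hN⟩ := exists_nat_gt (∫ x, |w x * g x| ∂μ)
  have : (N + 1 : ℝ) < ∫ x, |w x * g x| ∂μ := calc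
    (N + 1 : ℝ) < r ^ N * ∫ x, |f N x * g x| ∂μ := by
      rw [← div_lt_iff₀' (pow_pos hr N)]; exact hf_int N
    _ = ∫ x, |a N x * g x| ∂μ := by
      rw [← integral_const_mul]
      simp only [a, Pi.smul_apply, smul_eq_mul, abs_mul, abs_abs, abs_of_pos (pow_pos hr N),
        mul_assoc]
    _ ≤ ∫ x, |w x * g x| ∂μ := by
      refine integral_mono_ae (h _ (ha_mem N)).abs (h _ hw_mem).abs ?_
      filter_upwards [hw] with x hx
      rw [abs_mul, abs_mul]
      exact mul_le_mul_of_nonneg_right (abs_le_abs_of_nonneg (ha_nonneg N x) (hx N)) (abs_nonneg _)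
  linarith

/-- If `g ∈ L⁰(Ω)` satisfies `fg ∈ L¹(Ω)` for every `f ∈ X`, then
`sup_{‖f‖_X = 1} ‖fg‖_{L¹}` is finite, i.e. the defining set of the Köthe dual
seminorm is bounded above. -/
theorem statement1 {Ω : Type*} [MeasurableSpace Ω] {μ : Measure Ω} [SigmaFinite μ]
    (X : QBFS Ω μ) (g : Ω → ℝ) (hg : AEStronglyMeasurable g μ)
    (h : ∀ f, X.mem f → Integrable (fun x => f x * g x) μ) :
    BddAbove {c : ℝ | ∃ f, X.mem f ∧ X.norm f = 1 ∧ c = ∫ x, |f x * g x| ∂μ} :=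
  statement1_general X g h
end

section
/- Let E be a basis of sets in a σ-finite measure space Ω and let X be a quasi-Banach function space over Ω such that the maximal operator M^E : X → X is bounded. Then for every E ∈ E, one has 1_E ∈ X and 1_E ∈ X', with |E| ≤ ‖1_E‖_X ‖1_E‖_{X'} ≤ ‖M^E‖_{X→X} |E|. In particular, X' is saturated and hence a Banach function space. -/
open MeasureTheory ENNReal

/-- A basis of sets in a σ-finite measure space `(Ω, μ)`: a collection of measurable
sets of finite positive measure such that any two points lie in a common member
(in particular the sets cover `Ω`), admitting a countable subcollection
approximating measures from above. -/
structure SetBasis (Ω : Type*) [MeasurableSpace Ω] (μ : Measure Ω) where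
  sets : Set (Set Ω)
  measurableSet : ∀ E ∈ sets, MeasurableSet E
  measure_pos : ∀ E ∈ sets, 0 < μ E
  measure_lt_top : ∀ E ∈ sets, μ E < ∞
  two_point : ∀ x y : Ω, ∃ E ∈ sets, x ∈ E ∧ y ∈ E
  countable_approx : ∃ 𝓒 ⊆ sets, 𝓒.Countable ∧
    ∀ ε : ℝ≥0∞, 0 < ε → ∀ E ∈ sets, ∃ F ∈ 𝓒, E ⊆ F ∧ μ F ≤ (1 + ε) * μ E

/-- The normalized `Lᵖ`-average `⟨f⟩_{p,E} = (μ E)^{-1/p} ‖f · 1_E‖_{Lᵖ(μ)}`. -/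
noncomputable def avg {Ω : Type*} [MeasurableSpace Ω] (μ : Measure Ω)
    (p : ℝ≥0∞) (E : Set Ω) (f : Ω → ℝ) : ℝ≥0∞ :=
  μ E ^ (-(1 / p).toReal) * eLpNorm (E.indicator f) p μ

/-- The maximal operator `M_p^𝓑 f = sup_{E ∈ 𝓑} ⟨f⟩_{p,E} 1_E` associated to a
collection of sets `𝓑`. -/
noncomputable def maximalFn {Ω : Type*} [MeasurableSpace Ω] (μ : Measure Ω)
    (𝓑 : Set (Set Ω)) (p : ℝ≥0∞) (f : Ω → ℝ) (x : Ω) : ℝ≥0∞ :=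
  ⨆ E ∈ {E ∈ 𝓑 | x ∈ E}, avg μ p E f

/-- The real-valued maximal operator `M_p^𝓑` (via `toReal`). -/
noncomputable def maximalR {Ω : Type*} [MeasurableSpace Ω] (μ : Measure Ω)
    (𝓑 : Set (Set Ω)) (p : ℝ≥0∞) (f : Ω → ℝ) (x : Ω) : ℝ :=
  (maximalFn μ 𝓑 p f x).toReal

/-- An operator `T` is bounded on the function lattice given by (`mem`, `nrm`). -/
def IsBoundedOp {Ω : Type*} (mem : (Ω → ℝ) → Prop) (nrm : (Ω → ℝ) → ℝ)
    (T : (Ω → ℝ) → Ω → ℝ) : Prop :=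
  ∃ C : ℝ, 0 ≤ C ∧ ∀ f, mem f → mem (T f) ∧ nrm (T f) ≤ C * nrm f

/-- The operator norm of `T` on the function lattice given by (`mem`, `nrm`). -/
noncomputable def opNorm {Ω : Type*} (mem : (Ω → ℝ) → Prop) (nrm : (Ω → ℝ) → ℝ)
    (T : (Ω → ℝ) → Ω → ℝ) : ℝ :=
  sInf {C : ℝ | 0 ≤ C ∧ ∀ f, mem f → mem (T f) ∧ nrm (T f) ≤ C * nrm f}

section Averages

variable {Ω : Type*} [MeasurableSpace Ω] {μ : Measure Ω} {E : Set Ω} {f : Ω → ℝ}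

lemma avg_one_eq (hE : MeasurableSet E) (f : Ω → ℝ) :
    avg μ 1 E f = (μ E)⁻¹ * ∫⁻ x in E, ‖f x‖ₑ ∂μ := by
  simp_rw [avg, eLpNorm_one_eq_lintegral_enorm, enorm_indicator_eq_indicator_enorm,
    lintegral_indicator hE]
  norm_num [ENNReal.rpow_neg_one]

lemma setLIntegral_enorm_eq_avg_mul (hE : MeasurableSet E) (h0 : μ E ≠ 0) (htop : μ E ≠ ∞)
    (f : Ω → ℝ) : ∫⁻ x in E, ‖f x‖ₑ ∂μ = avg μ 1 E f * μ E := by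
  rw [avg_one_eq hE, mul_comm, ← mul_assoc, ENNReal.mul_inv_cancel h0 htop, one_mul]

lemma avg_le_of_forall_enorm_le (hE : MeasurableSet E) {c : ℝ≥0∞} (hf : ∀ y, ‖f y‖ₑ ≤ c) :
    avg μ 1 E f ≤ c := calc
  avg μ 1 E f ≤ (μ E)⁻¹ * (c * μ E) := by
    rw [avg_one_eq hE, ← setLIntegral_const]
    gcongr with y
    exact hf y
  _ = c * ((μ E)⁻¹ * μ E) := by ring
  _ ≤ c := mul_le_of_le_one_right' (ENNReal.inv_mul_le_one _)

lemma avg_indicator_one {F : Set Ω} (hE : MeasurableSet E) (hF : MeasurableSet F) (hFE : F ⊆ E) :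
    avg μ 1 E (F.indicator fun _ => (1 : ℝ)) = (μ E)⁻¹ * μ F := by
  simp_rw [avg_one_eq hE, enorm_indicator_eq_indicator_enorm, lintegral_indicator hF, enorm_one,
    setLIntegral_const, one_mul, Measure.restrict_apply hF, Set.inter_eq_self_of_subset_left hFE]

lemma avg_eq_iSup_avg_min_abs (hE : MeasurableSet E) (hf : AEMeasurable f (μ.restrict E)) :
    avg μ 1 E f = ⨆ n : ℕ, avg μ 1 E (fun x => min |f x| n) := by
  have hmin (x : Ω) (n : ℕ) : ‖min |f x| n‖ₑ = min ‖f x‖ₑ n := by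
    rw [Real.enorm_eq_ofReal_abs, abs_of_nonneg (le_min (abs_nonneg _) n.cast_nonneg),
      ENNReal.ofReal_min, ENNReal.ofReal_natCast, Real.enorm_eq_ofReal_abs]
  have hsup (x : Ω) : ⨆ n : ℕ, min ‖f x‖ₑ n = ‖f x‖ₑ := by
    refine le_antisymm (iSup_le fun n => min_le_left _ _) ?_
    obtain ⟨n, hn⟩ := ENNReal.exists_nat_gt (enorm_ne_top (x := f x))
    exact le_iSup_of_le n (min_eq_left hn.le).ge
  simp_rw [avg_one_eq hE, hmin, ← ENNReal.mul_iSup]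
  rw [← lintegral_iSup' (fun n => hf.enorm.min aemeasurable_const)
    (.of_forall fun x m k hmk => min_le_min_left _ (by exact_mod_cast hmk))]
  simp_rw [hsup]

lemma lintegral_enorm_mul_indicator_one (hE : MeasurableSet E) (f : Ω → ℝ) :
    ∫⁻ x, ‖f x * E.indicator (fun _ => (1 : ℝ)) x‖ₑ ∂μ = ∫⁻ x in E, ‖f x‖ₑ ∂μ := by
  simp_rw [← Set.indicator_mul_right, enorm_indicator_eq_indicator_enorm, mul_one,
    lintegral_indicator hE]

lemma integral_abs_mul_indicator_one (hE : MeasurableSet E) (hf : AEStronglyMeasurable f μ) :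
    ∫ x, |f x * E.indicator (fun _ => (1 : ℝ)) x| ∂μ = (∫⁻ x in E, ‖f x‖ₑ ∂μ).toReal := by
  rw [← lintegral_enorm_mul_indicator_one hE]
  exact integral_norm_eq_lintegral_enorm
    (hf.mul (measurable_const.indicator hE).aestronglyMeasurable)

end Averages

section MaximalFunction

variable {Ω : Type*} [MeasurableSpace Ω] {μ : Measure Ω} {𝓑 : Set (Set Ω)} {E : Set Ω}
  {f : Ω → ℝ}

lemma avg_le_maximalFn (hE : E ∈ 𝓑) {x : Ω} (hx : x ∈ E) (f : Ω → ℝ) :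
    avg μ 1 E f ≤ maximalFn μ 𝓑 1 f x :=
  le_biSup (fun E => avg μ 1 E f) ⟨hE, hx⟩

lemma maximalFn_le_of_forall_enorm_le (h𝓑 : ∀ E ∈ 𝓑, MeasurableSet E) {c : ℝ≥0∞}
    (hf : ∀ y, ‖f y‖ₑ ≤ c) (x : Ω) : maximalFn μ 𝓑 1 f x ≤ c :=
  iSup₂_le fun E hE => avg_le_of_forall_enorm_le (h𝓑 E hE.1) hf

lemma abs_toReal_avg_smul_indicator_le (h𝓑 : ∀ E ∈ 𝓑, MeasurableSet E) (hE : E ∈ 𝓑)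
    {c : ℝ≥0∞} (hc : c ≠ ∞) (hf : ∀ y, ‖f y‖ₑ ≤ c) (x : Ω) :
    |((avg μ 1 E f).toReal • E.indicator fun _ => (1 : ℝ)) x| ≤ |maximalR μ 𝓑 1 f x| := by
  by_cases hx : x ∈ E
  · have hM : maximalFn μ 𝓑 1 f x ≠ ∞ :=
      ne_top_of_le_ne_top hc (maximalFn_le_of_forall_enorm_le h𝓑 hf x)
    simpa [hx, maximalR, abs_of_nonneg] using ENNReal.toReal_mono hM (avg_le_maximalFn hE hx f)
  · simp [hx]

end MaximalFunction

def IsBoundedOpWith {Ω : Type*} (mem : (Ω → ℝ) → Prop) (nrm : (Ω → ℝ) → ℝ)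
    (T : (Ω → ℝ) → Ω → ℝ) (C : ℝ) : Prop :=
  ∀ f, mem f → mem (T f) ∧ nrm (T f) ≤ C * nrm f

lemma le_opNorm_mul {Ω : Type*} {mem : (Ω → ℝ) → Prop} {nrm : (Ω → ℝ) → ℝ}
    {T : (Ω → ℝ) → Ω → ℝ} (hT : IsBoundedOp mem nrm T) {a b : ℝ} (hb : 0 < b)
    (h : ∀ C, 0 ≤ C → IsBoundedOpWith mem nrm T C → a ≤ C * b) :
    a ≤ opNorm mem nrm T * b := by
  rw [← div_le_iff₀ hb]
  exact le_csInf hT fun C hC => (div_le_iff₀ hb).2 (h C hC.1 hC.2)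

section KoetheDual

variable {Ω : Type*} [MeasurableSpace Ω] {μ : Measure Ω} {mem : (Ω → ℝ) → Prop}
  {nrm : (Ω → ℝ) → ℝ} {g : Ω → ℝ} {B : ℝ}

lemma kNorm_le (hB : 0 ≤ B) (h : ∀ f, mem f → nrm f = 1 → ∫ x, |f x * g x| ∂μ ≤ B) :
    kNorm μ mem nrm g ≤ B :=
  Real.sSup_le (by rintro _ ⟨f, hf, h1, rfl⟩; exact h f hf h1) hB

lemma le_kNorm (h : ∀ f, mem f → nrm f = 1 → ∫ x, |f x * g x| ∂μ ≤ B) {f : Ω → ℝ}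
    (hf : mem f) (h1 : nrm f = 1) : ∫ x, |f x * g x| ∂μ ≤ kNorm μ mem nrm g :=
  le_csSup ⟨B, by rintro _ ⟨f, hf, h1, rfl⟩; exact h f hf h1⟩ ⟨f, hf, h1, rfl⟩

end KoetheDual

lemma SetBasis.exists_mem_measure_inter_pos {Ω : Type*} [MeasurableSpace Ω] {μ : Measure Ω}
    (𝓔 : SetBasis Ω μ) {A : Set Ω} (hA : 0 < μ A) : ∃ G ∈ 𝓔.sets, 0 < μ (A ∩ G) := by
  by_contra! h
  obtain ⟨𝓒, h𝓒, h𝓒_countable, h𝓒_approx⟩ := 𝓔.countable_approx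
  have hcover : A ⊆ ⋃ G ∈ 𝓒, A ∩ G := fun x hx => by
    obtain ⟨E, hE, hxE, -⟩ := 𝓔.two_point x x
    obtain ⟨G, hG, hEG, -⟩ := h𝓒_approx 1 one_pos E hE
    exact Set.mem_biUnion hG ⟨hx, hEG hxE⟩
  exact hA.ne' (measure_mono_null hcover ((measure_biUnion_null_iff h𝓒_countable).2
    fun G hG => nonpos_iff_eq_zero.1 (h G (h𝓒 hG))))

namespace QBFS

variable {Ω : Type*} [MeasurableSpace Ω] {μ : Measure Ω} (X : QBFS Ω μ) {𝓑 : Set (Set Ω)}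
  (𝓔 : SetBasis Ω μ) {E : Set Ω} {f : Ω → ℝ} {C : ℝ}

lemma norm_indicator_one_pos (hE : 0 < μ E) (hEX : X.mem (E.indicator fun _ => (1 : ℝ))) :
    0 < X.norm (E.indicator fun _ => (1 : ℝ)) := by
  refine (X.norm_nonneg _ hEX).lt_of_ne fun h0 => hE.ne' ?_
  have h := (X.norm_eq_zero_iff _ hEX).1 h0.symm
  simpa [Filter.EventuallyEq, ae_iff] using h

lemma min_abs_natCast_mem_and_norm_le (hf : X.mem f) (n : ℕ) :
    X.mem (fun x => min |f x| n) ∧ X.norm (fun x => min |f x| n) ≤ X.norm f :=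
  X.ideal f _ hf ((X.aestronglyMeasurable f hf).aemeasurable.abs.min
      aemeasurable_const).aestronglyMeasurable
    (.of_forall fun x => by
      rw [abs_of_nonneg (le_min (abs_nonneg _) n.cast_nonneg)]; exact min_le_left _ _)

lemma kMem_indicator_one_mono {F G : Set Ω} (hG : kMem μ X.mem (G.indicator fun _ => (1 : ℝ)))
    (hF : MeasurableSet F) (hFG : F ⊆ G) : kMem μ X.mem (F.indicator fun _ => (1 : ℝ)) := by
  have hFm : AEStronglyMeasurable (F.indicator fun _ => (1 : ℝ)) μ :=
    (measurable_const.indicator hF).aestronglyMeasurable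
  refine ⟨hFm, fun f hf => (hG.2 f hf).mono ((X.aestronglyMeasurable f hf).mul hFm)
    (.of_forall fun x => ?_)⟩
  simp only [norm_mul]
  gcongr
  by_cases hx : x ∈ F
  · simp [hx, hFG hx]
  · simp [hx]

lemma smul_indicator_mem_and_norm_le (h𝓑 : ∀ E ∈ 𝓑, MeasurableSet E)
    (hC : IsBoundedOpWith X.mem X.norm (maximalR μ 𝓑 1) C) (hE : E ∈ 𝓑) (hf : X.mem f)
    {c : ℝ≥0∞} (hc : c ≠ ∞) (hfc : ∀ y, ‖f y‖ₑ ≤ c) :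
    X.mem ((avg μ 1 E f).toReal • E.indicator fun _ => (1 : ℝ)) ∧
      X.norm ((avg μ 1 E f).toReal • E.indicator fun _ => (1 : ℝ)) ≤ C * X.norm f := by
  obtain ⟨hMf, hMf_le⟩ := hC f hf
  have h := X.ideal _ _ hMf
    ((measurable_const.indicator (h𝓑 E hE)).const_smul _).aestronglyMeasurable
    (.of_forall (abs_toReal_avg_smul_indicator_le h𝓑 hE hc hfc))
  exact ⟨h.1, h.2.trans hMf_le⟩

lemma indicator_one_mem (h𝓑 : ∀ E ∈ 𝓑, MeasurableSet E)
    (hC : IsBoundedOpWith X.mem X.norm (maximalR μ 𝓑 1) C) (hE : E ∈ 𝓑) (hpos : 0 < μ E)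
    (htop : μ E < ∞) : X.mem (E.indicator fun _ => (1 : ℝ)) := by
  obtain ⟨F, hFE, hF, hFpos, hFX⟩ := X.saturation E (h𝓑 E hE) hpos
  have hbdd (y : Ω) : ‖F.indicator (fun _ => (1 : ℝ)) y‖ₑ ≤ 1 := by
    by_cases hy : y ∈ F <;> simp [hy]
  set a := (avg μ 1 E (F.indicator fun _ => (1 : ℝ))).toReal with ha_def
  have ha : 0 < a := by
    rw [ha_def, avg_indicator_one (h𝓑 E hE) hF hFE]
    exact ENNReal.toReal_pos (mul_ne_zero (ENNReal.inv_ne_zero.2 htop.ne) hFpos.ne')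
      (ENNReal.mul_ne_top (ENNReal.inv_ne_top.2 hpos.ne') (measure_ne_top_of_subset hFE htop.ne))
  have h := X.smul_mem a⁻¹ _ (X.smul_indicator_mem_and_norm_le h𝓑 hC hE hFX one_ne_top hbdd).1
  rwa [smul_smul, inv_mul_cancel₀ ha.ne', one_smul] at h

lemma avg_le_ofReal (h𝓑 : ∀ E ∈ 𝓑, MeasurableSet E) (hC0 : 0 ≤ C)
    (hC : IsBoundedOpWith X.mem X.norm (maximalR μ 𝓑 1) C) (hE : E ∈ 𝓑) (hpos : 0 < μ E)
    (hEX : X.mem (E.indicator fun _ => (1 : ℝ))) (hf : X.mem f) :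
    avg μ 1 E f ≤ ENNReal.ofReal (C * X.norm f / X.norm (E.indicator fun _ => (1 : ℝ))) := by
  have hN := X.norm_indicator_one_pos hpos hEX
  rw [avg_eq_iSup_avg_min_abs (h𝓑 E hE) (X.aestronglyMeasurable f hf).aemeasurable.restrict]
  refine iSup_le fun n => ?_
  obtain ⟨hgX, hg_le⟩ := X.min_abs_natCast_mem_and_norm_le hf n
  have hbdd (y : Ω) : ‖min |f y| n‖ₑ ≤ n := by
    rw [Real.enorm_eq_ofReal_abs, ← ENNReal.ofReal_natCast]
    exact ENNReal.ofReal_le_ofReal ((abs_of_nonneg (le_min (abs_nonneg _) n.cast_nonneg)).trans_le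
      (min_le_right _ _))
  have hfin := ne_top_of_le_ne_top (ENNReal.natCast_ne_top n)
    (avg_le_of_forall_enorm_le (μ := μ) (h𝓑 E hE) hbdd)
  rw [← ENNReal.ofReal_toReal hfin]
  refine ENNReal.ofReal_le_ofReal ((le_div_iff₀ hN).2 ?_)
  rw [← abs_of_nonneg ENNReal.toReal_nonneg, ← X.norm_smul _ _ hEX]
  exact (X.smul_indicator_mem_and_norm_le h𝓑 hC hE hgX (ENNReal.natCast_ne_top n) hbdd).2.trans
    (mul_le_mul_of_nonneg_left hg_le hC0)

lemma kMem_indicator_one (hC0 : 0 ≤ C)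
    (hC : IsBoundedOpWith X.mem X.norm (maximalR μ 𝓔.sets 1) C) (hE : E ∈ 𝓔.sets)
    (hEX : X.mem (E.indicator fun _ => (1 : ℝ))) : kMem μ X.mem (E.indicator fun _ => (1 : ℝ)) := by
  have hEm := 𝓔.measurableSet E hE
  have hEm' : AEStronglyMeasurable (E.indicator fun _ => (1 : ℝ)) μ :=
    (measurable_const.indicator hEm).aestronglyMeasurable
  refine ⟨hEm', fun f hf => ⟨(X.aestronglyMeasurable f hf).mul hEm', ?_⟩⟩
  rw [hasFiniteIntegral_iff_enorm, lintegral_enorm_mul_indicator_one hEm,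
    setLIntegral_enorm_eq_avg_mul hEm (𝓔.measure_pos E hE).ne' (𝓔.measure_lt_top E hE).ne]
  exact ENNReal.mul_lt_top ((X.avg_le_ofReal 𝓔.measurableSet hC0 hC hE (𝓔.measure_pos E hE)
    hEX hf).trans_lt ENNReal.ofReal_lt_top) (𝓔.measure_lt_top E hE)

lemma integral_abs_mul_indicator_one_le (hC0 : 0 ≤ C)
    (hC : IsBoundedOpWith X.mem X.norm (maximalR μ 𝓔.sets 1) C) (hE : E ∈ 𝓔.sets)
    (hEX : X.mem (E.indicator fun _ => (1 : ℝ))) (hf : X.mem f) :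
    ∫ x, |f x * E.indicator (fun _ => (1 : ℝ)) x| ∂μ ≤
      C * X.norm f / X.norm (E.indicator fun _ => (1 : ℝ)) * (μ E).toReal := by
  have hEm := 𝓔.measurableSet E hE
  rw [integral_abs_mul_indicator_one hEm (X.aestronglyMeasurable f hf),
    setLIntegral_enorm_eq_avg_mul hEm (𝓔.measure_pos E hE).ne' (𝓔.measure_lt_top E hE).ne,
    ENNReal.toReal_mul]
  gcongr
  exact ENNReal.toReal_le_of_le_ofReal
    (div_nonneg (mul_nonneg hC0 (X.norm_nonneg f hf)) (X.norm_nonneg _ hEX))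
    (X.avg_le_ofReal 𝓔.measurableSet hC0 hC hE (𝓔.measure_pos E hE) hEX hf)

lemma norm_mul_kNorm_indicator_one_le (hC0 : 0 ≤ C)
    (hC : IsBoundedOpWith X.mem X.norm (maximalR μ 𝓔.sets 1) C) (hE : E ∈ 𝓔.sets)
    (hEX : X.mem (E.indicator fun _ => (1 : ℝ))) :
    X.norm (E.indicator fun _ => (1 : ℝ)) *
      kNorm μ X.mem X.norm (E.indicator fun _ => (1 : ℝ)) ≤ C * (μ E).toReal := by
  have hN := X.norm_indicator_one_pos (𝓔.measure_pos E hE) hEX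
  rw [← le_div_iff₀' hN]
  refine kNorm_le (by positivity) fun f hf h1 => ?_
  exact (X.integral_abs_mul_indicator_one_le 𝓔 hC0 hC hE hEX hf).trans_eq (by rw [h1]; ring)

lemma toReal_measure_le_norm_mul_kNorm_indicator_one (hC0 : 0 ≤ C)
    (hC : IsBoundedOpWith X.mem X.norm (maximalR μ 𝓔.sets 1) C) (hE : E ∈ 𝓔.sets)
    (hEX : X.mem (E.indicator fun _ => (1 : ℝ))) :
    (μ E).toReal ≤ X.norm (E.indicator fun _ => (1 : ℝ)) *
      kNorm μ X.mem X.norm (E.indicator fun _ => (1 : ℝ)) := by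
  set N := X.norm (E.indicator fun _ => (1 : ℝ))
  have hN : 0 < N := X.norm_indicator_one_pos (𝓔.measure_pos E hE) hEX
  have hf₀ : X.mem (N⁻¹ • E.indicator fun _ => (1 : ℝ)) := X.smul_mem _ _ hEX
  have hf₀_norm : X.norm (N⁻¹ • E.indicator fun _ => (1 : ℝ)) = 1 := by
    rw [X.norm_smul _ _ hEX, abs_of_pos (inv_pos.2 hN), inv_mul_cancel₀ hN.ne']
  have hint : ∫ x, |(N⁻¹ • E.indicator fun _ => (1 : ℝ)) x *
      E.indicator (fun _ => (1 : ℝ)) x| ∂μ = N⁻¹ * (μ E).toReal := by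
    have hpt : (fun x => |(N⁻¹ • E.indicator fun _ => (1 : ℝ)) x *
        E.indicator (fun _ => (1 : ℝ)) x|) = E.indicator fun _ => N⁻¹ := by
      ext x
      by_cases hx : x ∈ E <;> simp [hx, hN.le]
    rw [hpt, integral_indicator_const _ (𝓔.measurableSet E hE), smul_eq_mul, mul_comm,
      Measure.real]
  calc (μ E).toReal = N * (N⁻¹ * (μ E).toReal) := by field_simp
    _ ≤ N * kNorm μ X.mem X.norm (E.indicator fun _ => (1 : ℝ)) := by
      gcongr
      rw [← hint]
      exact le_kNorm (B := C / N * (μ E).toReal) (fun f hf h1 =>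
        (X.integral_abs_mul_indicator_one_le 𝓔 hC0 hC hE hEX hf).trans_eq (by rw [h1, mul_one]))
        hf₀ hf₀_norm

end QBFS

theorem statement10_general {Ω : Type*} [MeasurableSpace Ω] {μ : Measure Ω}
    (X : QBFS Ω μ) (𝓔 : SetBasis Ω μ)
    (hb : IsBoundedOp X.mem X.norm (maximalR μ 𝓔.sets 1)) :
    (∀ E ∈ 𝓔.sets,
      X.mem (E.indicator fun _ => (1 : ℝ)) ∧
      kMem μ X.mem (E.indicator fun _ => (1 : ℝ)) ∧
      (μ E).toReal ≤ X.norm (E.indicator fun _ => (1 : ℝ)) *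
          kNorm μ X.mem X.norm (E.indicator fun _ => (1 : ℝ)) ∧
      X.norm (E.indicator fun _ => (1 : ℝ)) *
          kNorm μ X.mem X.norm (E.indicator fun _ => (1 : ℝ)) ≤
        opNorm X.mem X.norm (maximalR μ 𝓔.sets 1) * (μ E).toReal) ∧
    (∀ E : Set Ω, MeasurableSet E → 0 < μ E →
      ∃ F, F ⊆ E ∧ MeasurableSet F ∧ 0 < μ F ∧
        kMem μ X.mem (F.indicator fun _ => (1 : ℝ))) := by
  obtain ⟨C, hC0, hC⟩ := hb
  have hEX (E : Set Ω) (hE : E ∈ 𝓔.sets) : X.mem (E.indicator fun _ => (1 : ℝ)) :=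
    X.indicator_one_mem 𝓔.measurableSet hC hE (𝓔.measure_pos E hE) (𝓔.measure_lt_top E hE)
  have hEX' (E : Set Ω) (hE : E ∈ 𝓔.sets) : kMem μ X.mem (E.indicator fun _ => (1 : ℝ)) :=
    X.kMem_indicator_one 𝓔 hC0 hC hE (hEX E hE)
  refine ⟨fun E hE => ⟨hEX E hE, hEX' E hE, ?_, ?_⟩, fun A hA hApos => ?_⟩
  · exact X.toReal_measure_le_norm_mul_kNorm_indicator_one 𝓔 hC0 hC hE (hEX E hE)
  · exact le_opNorm_mul ⟨C, hC0, hC⟩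
      (ENNReal.toReal_pos (𝓔.measure_pos E hE).ne' (𝓔.measure_lt_top E hE).ne)
      fun C' hC'0 hC' => X.norm_mul_kNorm_indicator_one_le 𝓔 hC'0 hC' hE (hEX E hE)
  · obtain ⟨G, hG, hAG⟩ := 𝓔.exists_mem_measure_inter_pos hApos
    have hAGm := hA.inter (𝓔.measurableSet G hG)
    exact ⟨A ∩ G, Set.inter_subset_left, hAGm, hAG,
      X.kMem_indicator_one_mono (hEX' G hG) hAGm Set.inter_subset_right⟩

/-- If `M^𝓔 : X → X` is bounded, then for every `E ∈ 𝓔` one has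
`1_E ∈ X` and `1_E ∈ X'` with `μ(E) ≤ ‖1_E‖_X ‖1_E‖_{X'} ≤ ‖M^𝓔‖_{X→X} μ(E)`;
in particular `X'` is saturated. -/
theorem statement10 {Ω : Type*} [MeasurableSpace Ω] {μ : Measure Ω} [SigmaFinite μ]
    (X : QBFS Ω μ) (𝓔 : SetBasis Ω μ)
    (hb : IsBoundedOp X.mem X.norm (maximalR μ 𝓔.sets 1)) :
    (∀ E ∈ 𝓔.sets,
      X.mem (E.indicator fun _ => (1 : ℝ)) ∧
      kMem μ X.mem (E.indicator fun _ => (1 : ℝ)) ∧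
      (μ E).toReal ≤ X.norm (E.indicator fun _ => (1 : ℝ)) *
          kNorm μ X.mem X.norm (E.indicator fun _ => (1 : ℝ)) ∧
      X.norm (E.indicator fun _ => (1 : ℝ)) *
          kNorm μ X.mem X.norm (E.indicator fun _ => (1 : ℝ)) ≤
        opNorm X.mem X.norm (maximalR μ 𝓔.sets 1) * (μ E).toReal) ∧
    (∀ E : Set Ω, MeasurableSet E → 0 < μ E →
      ∃ F, F ⊆ E ∧ MeasurableSet F ∧ 0 < μ F ∧
        kMem μ X.mem (F.indicator fun _ => (1 : ℝ))) :=
  statement10_general X 𝓔 hb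
end

section
/- Let p₁,p₂ ∈ (0,∞] with 1/p := 1/p₁ + 1/p₂ > 0, q ∈ [p,∞), 1/q_j := (1/p_j)·(p/q), and let v₁, v₂ be weights on ℝ^d. Then the pointwise product of weighted Morrey spaces factorizes: L^{p₁,q₁}_{v₁}(ℝ^d) · L^{p₂,q₂}_{v₂}(ℝ^d) = L^{p,q}_v(ℝ^d) with equal (quasi-)norms, where v = v₁v₂. -/
open MeasureTheory ENNReal

/-- The collection of (axis-parallel, nondegenerate, closed) cubes in `ℝ^d`. -/
def cubes (d : ℕ) : Set (Set (Fin d → ℝ)) :=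
  {Q | ∃ (c : Fin d → ℝ) (h : ℝ), 0 < h ∧ Q = {x | ∀ i, c i ≤ x i ∧ x i ≤ c i + h}}

/-- The weighted Morrey norm `‖g‖_{𝓛^{p,q}_w} = sup_Q |Q|^{1/q} ⟨g w⟩_{p,Q}`. -/
noncomputable def morreyNorm {d : ℕ} (p q : ℝ≥0∞) (w : (Fin d → ℝ) → ℝ)
    (g : (Fin d → ℝ) → ℝ) : ℝ≥0∞ :=
  ⨆ Q ∈ cubes d, volume Q ^ (1 / q).toReal * avg volume p Q fun x => g x * w x

/-! Hölder's inequality on each cube, combined with `1/q = 1/q₁ + 1/q₂`, bounds the Morrey norm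
of `h` by `‖f₁‖ ‖f₂‖` for every factorization `|h| ≤ f₁ f₂`. Conversely, with `G = |h v₁ v₂|` and
`r_j = p/p_j` (so `r₁ + r₂ = 1`), the factors `f_j = G^{r_j} / v_j` satisfy `f₁ f₂ = |h|`, and
`‖f_j‖ = ‖h‖^{r_j}` because on every cube the `L^{p_j}`-average of `G^{r_j}` is the `r_j`-th
power of the `L^p`-average of `G`. -/

lemma ENNReal.biSup_rpow {ι : Type*} {S : Set ι} (hS : S.Nonempty) (F : ι → ℝ≥0∞) {r : ℝ}
    (hr : 0 ≤ r) : (⨆ i ∈ S, F i) ^ r = ⨆ i ∈ S, F i ^ r := by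
  rcases hr.eq_or_lt with rfl | hr
  · simp only [ENNReal.rpow_zero, biSup_const hS]
  · exact (ENNReal.orderIsoRpow r hr).map_iSup₂ _

lemma abs_mul_rpow_div_mul_rpow_div {a b c r s : ℝ} (hb : 0 < b) (hc : 0 < c) (hr : 0 ≤ r)
    (hs : 0 ≤ s) (hrs : r + s = 1) :
    |a * (b * c)| ^ r / b * (|a * (b * c)| ^ s / c) = |a| := by
  rw [div_mul_div_comm, ← Real.rpow_add_of_nonneg (abs_nonneg _) hr hs, hrs, Real.rpow_one,
    abs_mul, abs_of_pos (mul_pos hb hc), mul_div_assoc, div_self (mul_pos hb hc).ne', mul_one]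

lemma ENNReal.toReal_div_add_toReal_div_eq_one {p p₁ p₂ : ℝ≥0∞} (hp0 : p ≠ 0) (hptop : p ≠ ∞)
    (hp₁ : p₁ ≠ 0) (hp₂ : p₂ ≠ 0) (hp : 1 / p = 1 / p₁ + 1 / p₂) :
    (p / p₁).toReal + (p / p₂).toReal = 1 := by
  rw [← toReal_add (div_lt_top hptop hp₁).ne (div_lt_top hptop hp₂).ne]
  simp only [div_eq_mul_inv, ← mul_add]
  rw [← one_div, ← one_div, ← hp, one_div, ENNReal.mul_inv_cancel hp0 hptop, toReal_one]

lemma ENNReal.ne_zero_of_one_div_eq_mul {p' q' s : ℝ≥0∞} (hp' : p' ≠ 0) (hs : s ≠ ∞)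
    (h : 1 / q' = 1 / p' * s) : q' ≠ 0 := by
  rintro rfl
  simp only [one_div, inv_zero] at h
  exact mul_ne_top (inv_ne_top.2 hp') hs h.symm

section avg

variable {Ω : Type*} [MeasurableSpace Ω] {μ : Measure Ω} {E : Set Ω}

lemma avg_congr_ae {p : ℝ≥0∞} {f g : Ω → ℝ} (hfg : f =ᵐ[μ] g) : avg μ p E f = avg μ p E g := by
  rw [avg, avg, eLpNorm_congr_ae (hfg.indicator)]

lemma avg_mono_ae {p : ℝ≥0∞} {f g : Ω → ℝ} (hfg : ∀ᵐ x ∂μ, |f x| ≤ |g x|) :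
    avg μ p E f ≤ avg μ p E g := by
  refine mul_le_mul_right (eLpNorm_mono_ae ?_) _
  filter_upwards [hfg] with x hx
  by_cases hxE : x ∈ E <;> simp [hxE, hx]

lemma avg_mul_le {p p₁ p₂ : ℝ≥0∞} (hp₁ : p₁ ≠ 0) (hp₂ : p₂ ≠ 0) (hp : 1 / p = 1 / p₁ + 1 / p₂)
    (hE : MeasurableSet E) (hE0 : μ E ≠ 0) (hEtop : μ E ≠ ∞) {f₁ f₂ : Ω → ℝ}
    (hf₁ : AEStronglyMeasurable f₁ μ) (hf₂ : AEStronglyMeasurable f₂ μ) :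
    avg μ p E (f₁ * f₂) ≤ avg μ p₁ E f₁ * avg μ p₂ E f₂ := by
  have : HolderTriple p₁ p₂ p := ⟨by simpa only [one_div] using hp.symm⟩
  have hexp : (1 / p).toReal = (1 / p₁).toReal + (1 / p₂).toReal := by
    rw [hp, toReal_add (by simpa) (by simpa)]
  calc avg μ p E (f₁ * f₂)
      = μ E ^ (-(1 / p₁).toReal) * μ E ^ (-(1 / p₂).toReal) *
          eLpNorm (E.indicator f₁ • E.indicator f₂) p μ := by
        rw [avg, hexp, neg_add, rpow_add _ _ hE0 hEtop]
        congr 2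
        exact Set.indicator_mul E f₁ f₂
    _ ≤ μ E ^ (-(1 / p₁).toReal) * μ E ^ (-(1 / p₂).toReal) *
          (eLpNorm (E.indicator f₁) p₁ μ * eLpNorm (E.indicator f₂) p₂ μ) := by
        gcongr
        exact eLpNorm_smul_le_mul_eLpNorm (hf₂.indicator hE) (hf₁.indicator hE)
    _ = avg μ p₁ E f₁ * avg μ p₂ E f₂ := by
        rw [avg, avg]
        ring

lemma avg_abs_rpow {p p' : ℝ≥0∞} (hp0 : p ≠ 0) (hptop : p ≠ ∞) (hp' : p' ≠ 0) (hE0 : μ E ≠ 0)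
    (f : Ω → ℝ) :
    avg μ p' E (fun x => |f x| ^ (p / p').toReal) = avg μ p E f ^ (p / p').toReal := by
  set r := (p / p').toReal with hr
  have hexp : (1 / p').toReal = (1 / p).toReal * r := by
    rw [hr, ← toReal_mul]
    congr 1
    simp only [div_eq_mul_inv, one_mul]
    rw [← mul_assoc, ENNReal.inv_mul_cancel hp0 hptop, one_mul]
  rcases eq_or_ne p' ∞ with rfl | hp'top
  · have hr0 : r = 0 := by simp [hr]
    simp [avg, hr0, eLpNormEssSup_indicator_const_eq E (1 : ℝ) hE0]
  have hrpos : 0 < r := toReal_pos (by simp [hp0, hp'top]) (div_lt_top hptop hp').ne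
  have hind : E.indicator (fun x => |f x| ^ r) = fun x => ‖E.indicator f x‖ ^ r := by
    funext x
    by_cases hxE : x ∈ E <;> simp [hxE, Real.zero_rpow hrpos.ne']
  rw [avg, avg, hind, eLpNorm_norm_rpow _ hrpos, hr, ofReal_toReal (div_lt_top hptop hp').ne,
    ENNReal.mul_div_cancel hp' hp'top, hexp, neg_mul_eq_neg_mul, rpow_mul,
    mul_rpow_of_nonneg _ _ toReal_nonneg]

end avg

variable {d : ℕ}

section cubes

variable {Q : Set (Fin d → ℝ)}

lemma cubes_nonempty : (cubes d).Nonempty :=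
  ⟨_, 0, 1, one_pos, rfl⟩

lemma eq_Icc_of_mem_cubes (hQ : Q ∈ cubes d) :
    ∃ (c : Fin d → ℝ) (l : ℝ), 0 < l ∧ Q = Set.Icc c (c + fun _ => l) := by
  obtain ⟨c, l, hl, rfl⟩ := hQ
  refine ⟨c, l, hl, ?_⟩
  ext x
  simp [Pi.le_def, forall_and]

lemma measurableSet_of_mem_cubes (hQ : Q ∈ cubes d) :
    MeasurableSet Q := by
  obtain ⟨c, l, -, rfl⟩ := eq_Icc_of_mem_cubes hQ
  exact measurableSet_Icc

lemma volume_ne_zero_of_mem_cubes (hQ : Q ∈ cubes d) :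
    volume Q ≠ 0 := by
  obtain ⟨c, l, hl, rfl⟩ := eq_Icc_of_mem_cubes hQ
  simp [Real.volume_Icc_pi, hl]

lemma volume_ne_top_of_mem_cubes (hQ : Q ∈ cubes d) :
    volume Q ≠ ∞ := by
  obtain ⟨c, l, -, rfl⟩ := eq_Icc_of_mem_cubes hQ
  simp [Real.volume_Icc_pi]

end cubes

lemma le_morreyNorm {p q : ℝ≥0∞} {w g : (Fin d → ℝ) → ℝ} {Q : Set (Fin d → ℝ)}
    (hQ : Q ∈ cubes d) :
    volume Q ^ (1 / q).toReal * avg volume p Q (fun x => g x * w x) ≤ morreyNorm p q w g :=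
  le_iSup₂ (f := fun Q (_ : Q ∈ cubes d) => volume Q ^ (1 / q).toReal *
    avg volume p Q (fun x => g x * w x)) Q hQ

lemma morreyNorm_abs_mul_rpow_div {p q p' q' : ℝ≥0∞} (hp0 : p ≠ 0) (hptop : p ≠ ∞)
    (hp' : p' ≠ 0) (hq' : 1 / q' = 1 / p' * (p / q)) {u w : (Fin d → ℝ) → ℝ} (hw : ∀ᵐ x, 0 < w x)
    (g : (Fin d → ℝ) → ℝ) :
    morreyNorm p' q' w (fun x => |g x * u x| ^ (p / p').toReal / w x) =
      morreyNorm p q u g ^ (p / p').toReal := by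
  set r := (p / p').toReal
  have hexp : (1 / q').toReal = (1 / q).toReal * r := by
    rw [← toReal_mul, hq']
    congr 1
    simp only [div_eq_mul_inv, one_mul]
    ring
  have hcancel : (fun x => |g x * u x| ^ r / w x * w x) =ᵐ[volume] fun x => |g x * u x| ^ r := by
    filter_upwards [hw] with x hx
    exact div_mul_cancel₀ _ hx.ne'
  rw [morreyNorm, morreyNorm, ENNReal.biSup_rpow cubes_nonempty _ toReal_nonneg]
  refine iSup_congr fun Q => iSup_congr fun hQ => ?_
  rw [avg_congr_ae hcancel, avg_abs_rpow hp0 hptop hp' (volume_ne_zero_of_mem_cubes hQ), hexp,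
    rpow_mul, mul_rpow_of_nonneg _ _ toReal_nonneg]

lemma morreyNorm_le_mul_of_abs_le {p p₁ p₂ q q₁ q₂ : ℝ≥0∞} (hp₁ : p₁ ≠ 0) (hp₂ : p₂ ≠ 0)
    (hp : 1 / p = 1 / p₁ + 1 / p₂) (hq₁ : q₁ ≠ 0) (hq₂ : q₂ ≠ 0) (hq : 1 / q = 1 / q₁ + 1 / q₂)
    {w₁ w₂ f₁ f₂ g : (Fin d → ℝ) → ℝ}
    (hw₁ : AEStronglyMeasurable w₁) (hw₂ : AEStronglyMeasurable w₂)
    (hf₁ : AEStronglyMeasurable f₁) (hf₂ : AEStronglyMeasurable f₂)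
    (hg : ∀ᵐ x, |g x| ≤ f₁ x * f₂ x) :
    morreyNorm p q (fun x => w₁ x * w₂ x) g ≤
      morreyNorm p₁ q₁ w₁ f₁ * morreyNorm p₂ q₂ w₂ f₂ := by
  have hgw : ∀ᵐ x, |g x * (w₁ x * w₂ x)| ≤ |f₁ x * w₁ x * (f₂ x * w₂ x)| := by
    filter_upwards [hg] with x hx
    calc |g x * (w₁ x * w₂ x)| ≤ |f₁ x * f₂ x| * |w₁ x * w₂ x| := by
          rw [abs_mul]
          exact mul_le_mul_of_nonneg_right (hx.trans (le_abs_self _)) (abs_nonneg _)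
      _ = |f₁ x * w₁ x * (f₂ x * w₂ x)| := by
          simp only [abs_mul]
          ring
  refine iSup₂_le fun Q hQ => ?_
  have hQ0 := volume_ne_zero_of_mem_cubes hQ
  have hQtop := volume_ne_top_of_mem_cubes hQ
  calc volume Q ^ (1 / q).toReal * avg volume p Q (fun x => g x * (w₁ x * w₂ x))
      ≤ volume Q ^ ((1 / q₁).toReal + (1 / q₂).toReal) *
          avg volume p Q ((fun x => f₁ x * w₁ x) * fun x => f₂ x * w₂ x) := by
        rw [hq, toReal_add (by simpa) (by simpa)]
        exact mul_le_mul_right (avg_mono_ae hgw) _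
    _ ≤ volume Q ^ ((1 / q₁).toReal + (1 / q₂).toReal) *
          (avg volume p₁ Q (fun x => f₁ x * w₁ x) * avg volume p₂ Q (fun x => f₂ x * w₂ x)) :=
        mul_le_mul_right (avg_mul_le hp₁ hp₂ hp (measurableSet_of_mem_cubes hQ) hQ0 hQtop
          (hf₁.mul hw₁) (hf₂.mul hw₂)) _
    _ = (volume Q ^ (1 / q₁).toReal * avg volume p₁ Q (fun x => f₁ x * w₁ x)) *
          (volume Q ^ (1 / q₂).toReal * avg volume p₂ Q (fun x => f₂ x * w₂ x)) := by
        rw [rpow_add_of_nonneg _ _ toReal_nonneg toReal_nonneg]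
        ring
    _ ≤ morreyNorm p₁ q₁ w₁ f₁ * morreyNorm p₂ q₂ w₂ f₂ :=
        mul_le_mul' (le_morreyNorm hQ) (le_morreyNorm hQ)

theorem statement18_general {d : ℕ} (p₁ p₂ p q q₁ q₂ : ℝ≥0∞)
    (hp₁ : 0 < p₁) (hp₂ : 0 < p₂) (hp : 1 / p = 1 / p₁ + 1 / p₂) (hppos : 0 < 1 / p)
    (hq : p ≤ q)
    (hq₁ : 1 / q₁ = 1 / p₁ * (p / q)) (hq₂ : 1 / q₂ = 1 / p₂ * (p / q))
    (v₁ v₂ : (Fin d → ℝ) → ℝ)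
    (hv₁m : Measurable v₁) (hv₂m : Measurable v₂)
    (hv₁ : ∀ᵐ x ∂volume, 0 < v₁ x) (hv₂ : ∀ᵐ x ∂volume, 0 < v₂ x)
    (h : (Fin d → ℝ) → ℝ) (hmeas : AEStronglyMeasurable h volume) :
    sInf {c : ℝ≥0∞ | ∃ f₁ f₂ : (Fin d → ℝ) → ℝ,
        AEStronglyMeasurable f₁ volume ∧ AEStronglyMeasurable f₂ volume ∧
        (∀ᵐ x ∂volume, 0 ≤ f₁ x) ∧ (∀ᵐ x ∂volume, 0 ≤ f₂ x) ∧
        (∀ᵐ x ∂volume, |h x| ≤ f₁ x * f₂ x) ∧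
        c = morreyNorm p₁ q₁ v₁ f₁ * morreyNorm p₂ q₂ v₂ f₂} =
      morreyNorm p q (fun x => v₁ x * v₂ x) h := by
  have hptop : p ≠ ∞ := by
    rintro rfl
    simp at hppos
  have hp0 : p ≠ 0 := by
    rintro rfl
    simp only [one_div, inv_zero] at hp
    exact add_ne_top.2 ⟨inv_ne_top.2 hp₁.ne', inv_ne_top.2 hp₂.ne'⟩ hp.symm
  have hq0 : q ≠ 0 := ((pos_iff_ne_zero.2 hp0).trans_le hq).ne'
  have hq₁0 := ne_zero_of_one_div_eq_mul hp₁.ne' (div_lt_top hptop hq0).ne hq₁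
  have hq₂0 := ne_zero_of_one_div_eq_mul hp₂.ne' (div_lt_top hptop hq0).ne hq₂
  have hq_add : 1 / q = 1 / q₁ + 1 / q₂ := by
    rw [hq₁, hq₂, ← add_mul, ← hp]
    simp only [div_eq_mul_inv, one_mul]
    rw [← mul_assoc, ENNReal.inv_mul_cancel hp0 hptop, one_mul]
  have hr_add := toReal_div_add_toReal_div_eq_one hp0 hptop hp₁.ne' hp₂.ne' hp
  set G := fun x => |h x * (v₁ x * v₂ x)|
  have hGm : AEMeasurable G := by fun_prop
  refine le_antisymm (sInf_le ⟨fun x => G x ^ (p / p₁).toReal / v₁ x,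
    fun x => G x ^ (p / p₂).toReal / v₂ x,
    ((hGm.pow_const _).div hv₁m.aemeasurable).aestronglyMeasurable,
    ((hGm.pow_const _).div hv₂m.aemeasurable).aestronglyMeasurable, ?_, ?_, ?_, ?_⟩) (le_sInf ?_)
  · filter_upwards [hv₁] with x hx using div_nonneg (by positivity) hx.le
  · filter_upwards [hv₂] with x hx using div_nonneg (by positivity) hx.le
  · filter_upwards [hv₁, hv₂] with x hx₁ hx₂
    exact (abs_mul_rpow_div_mul_rpow_div hx₁ hx₂ toReal_nonneg toReal_nonneg hr_add).ge
  · rw [morreyNorm_abs_mul_rpow_div hp0 hptop hp₁.ne' hq₁ hv₁,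
      morreyNorm_abs_mul_rpow_div hp0 hptop hp₂.ne' hq₂ hv₂,
      ← rpow_add_of_nonneg _ _ toReal_nonneg toReal_nonneg, hr_add, rpow_one]
  · rintro _ ⟨f₁, f₂, hf₁, hf₂, -, -, hle, rfl⟩
    exact morreyNorm_le_mul_of_abs_le hp₁.ne' hp₂.ne' hp hq₁0 hq₂0 hq_add
      hv₁m.aestronglyMeasurable hv₂m.aestronglyMeasurable hf₁ hf₂ hle

/-- For `p₁, p₂ ∈ (0,∞]` with `1/p = 1/p₁ + 1/p₂ > 0`, `q ∈ [p,∞)`,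
`1/q_j = (1/p_j)(p/q)` and weights `v₁, v₂` on `ℝ^d`, the weighted Morrey spaces
factorize: `𝓛^{p₁,q₁}_{v₁} · 𝓛^{p₂,q₂}_{v₂} = 𝓛^{p,q}_{v₁v₂}` with equal
(quasi-)norms, the product quasi-norm being the infimum of
`‖f₁‖·‖f₂‖` over all factorizations `|h| ≤ f₁ f₂` with `f_j ≥ 0`. -/
theorem statement18 {d : ℕ} (p₁ p₂ p q q₁ q₂ : ℝ≥0∞)
    (hp₁ : 0 < p₁) (hp₂ : 0 < p₂) (hp : 1 / p = 1 / p₁ + 1 / p₂) (hppos : 0 < 1 / p)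
    (hq : p ≤ q) (hqfin : q ≠ ∞)
    (hq₁ : 1 / q₁ = 1 / p₁ * (p / q)) (hq₂ : 1 / q₂ = 1 / p₂ * (p / q))
    (v₁ v₂ : (Fin d → ℝ) → ℝ)
    (hv₁m : Measurable v₁) (hv₂m : Measurable v₂)
    (hv₁ : ∀ᵐ x ∂volume, 0 < v₁ x) (hv₂ : ∀ᵐ x ∂volume, 0 < v₂ x)
    (h : (Fin d → ℝ) → ℝ) (hmeas : AEStronglyMeasurable h volume) :
    sInf {c : ℝ≥0∞ | ∃ f₁ f₂ : (Fin d → ℝ) → ℝ,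
        AEStronglyMeasurable f₁ volume ∧ AEStronglyMeasurable f₂ volume ∧
        (∀ᵐ x ∂volume, 0 ≤ f₁ x) ∧ (∀ᵐ x ∂volume, 0 ≤ f₂ x) ∧
        (∀ᵐ x ∂volume, |h x| ≤ f₁ x * f₂ x) ∧
        c = morreyNorm p₁ q₁ v₁ f₁ * morreyNorm p₂ q₂ v₂ f₂} =
      morreyNorm p q (fun x => v₁ x * v₂ x) h :=
  statement18_general p₁ p₂ p q q₁ q₂ hp₁ hp₂ hp hppos hq hq₁ hq₂ v₁ v₂ hv₁m hv₂m hv₁ hv₂ h hmeas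
end

section
/- Let X be a quasi-Banach function space over a σ-finite measure space Ω. Then the weak space wX, defined by ‖f‖_{wX} = sup_{λ>0} λ‖1_{{x : |f(x)|>λ}}‖_X, is again a quasi-Banach function space, and X ⊆ wX with ‖f‖_{wX} ≤ ‖f‖_X for all f ∈ X. Moreover, for any measurable set E, ‖1_E‖_{wX} = ‖1_E‖_X. -/
open MeasureTheory ENNReal

/-- Membership in the weak space `wX`: `f ∈ L⁰` such that the distribution-set
indicators lie in `X` and `sup_{λ>0} λ‖1_{{|f|>λ}}‖_X < ∞`. -/
def wMem {Ω : Type*} [MeasurableSpace Ω] {μ : Measure Ω} (X : QBFS Ω μ)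
    (f : Ω → ℝ) : Prop :=
  AEStronglyMeasurable f μ ∧
    (∀ l : ℝ, 0 < l → X.mem ({x | l < |f x|}.indicator fun _ => (1 : ℝ))) ∧
    BddAbove {c : ℝ | ∃ l : ℝ, 0 < l ∧
      c = l * X.norm ({x | l < |f x|}.indicator fun _ => (1 : ℝ))}

/-- The weak quasi-norm `‖f‖_{wX} = sup_{λ>0} λ‖1_{{|f|>λ}}‖_X`. -/
noncomputable def wNorm {Ω : Type*} [MeasurableSpace Ω] {μ : Measure Ω} (X : QBFS Ω μ)
    (f : Ω → ℝ) : ℝ :=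
  sSup {c : ℝ | ∃ l : ℝ, 0 < l ∧
    c = l * X.norm ({x | l < |f x|}.indicator fun _ => (1 : ℝ))}

/-! Every property of `wX` is inherited level by level from `X` through the indicators
`1_{|f|>λ}`: `|g| ≤ |f|` gives `1_{|g|>λ} ≤ 1_{|f|>λ}`, the set `{|f+g| > λ}` lies in
`{|f| > λ/2} ∪ {|g| > λ/2}` (whence the constant `2K`), multiplying `f` by `c` rescales `λ`,
and monotone convergence `f_n ↑ g` passes to the indicators, so that the Fatou property of `X`
applies at every level. Chebyshev's inequality `λ 1_{|f|>λ} ≤ |f|` gives `X ⊆ wX`, and for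
`f = 1_E` the level sets are `E` for `λ < 1` and empty for `λ ≥ 1`. -/

open Filter Topology

section distIndicator

variable {Ω : Type*}

noncomputable def distIndicator (f : Ω → ℝ) (l : ℝ) : Ω → ℝ :=
  {x | l < |f x|}.indicator fun _ => (1 : ℝ)

lemma distIndicator_apply (f : Ω → ℝ) (l : ℝ) (x : Ω) :
    distIndicator f l x = if l < |f x| then 1 else 0 := by
  simp [distIndicator, Set.indicator_apply]

lemma distIndicator_nonneg (f : Ω → ℝ) (l : ℝ) (x : Ω) : 0 ≤ distIndicator f l x := by
  rw [distIndicator_apply]; split_ifs <;> norm_num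

lemma distIndicator_le_of_abs_le {f g : Ω → ℝ} {x : Ω} (h : |g x| ≤ |f x|) (l : ℝ) :
    distIndicator g l x ≤ distIndicator f l x := by
  by_cases hg : l < |g x|
  · simp [distIndicator_apply, hg, hg.trans_le h]
  · rw [distIndicator_apply, if_neg hg]
    exact distIndicator_nonneg f l x

lemma distIndicator_smul {c : ℝ} (hc : c ≠ 0) (f : Ω → ℝ) (l : ℝ) :
    distIndicator (c • f) l = distIndicator f (l / |c|) := by
  ext x
  simp only [distIndicator_apply, Pi.smul_apply, smul_eq_mul, abs_mul,
    div_lt_iff₀' (abs_pos.2 hc)]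

lemma distIndicator_add_le (f g : Ω → ℝ) (l : ℝ) (x : Ω) :
    distIndicator (f + g) l x ≤ distIndicator f (l / 2) x + distIndicator g (l / 2) x := by
  have hfg : l < |(f + g) x| → l / 2 < |f x| ∨ l / 2 < |g x| := by
    contrapose!
    rintro ⟨hf, hg⟩
    calc |(f + g) x| ≤ |f x| + |g x| := abs_add_le _ _
      _ ≤ l := by linarith
  simp only [distIndicator_apply]
  split_ifs <;> grind

lemma tendsto_distIndicator_apply {f : ℕ → Ω → ℝ} {g : Ω → ℝ} {x : Ω}
    (hlim : Tendsto (fun n => f n x) atTop (𝓝 (g x))) (hle : ∀ n, |f n x| ≤ |g x|) (l : ℝ) :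
    Tendsto (fun n => distIndicator (f n) l x) atTop (𝓝 (distIndicator g l x)) := by
  by_cases hgl : l < |g x|
  · have hev : ∀ᶠ n in atTop, l < |f n x| := hlim.abs.eventually_const_lt hgl
    refine tendsto_const_nhds.congr' ?_
    filter_upwards [hev] with n hn
    simp [distIndicator_apply, hn, hgl]
  · have hfl : ∀ n, ¬ l < |f n x| := fun n hn => hgl (hn.trans_le (hle n))
    simp [distIndicator_apply, hfl, hgl]

lemma distIndicator_indicator_one {E : Set Ω} {l : ℝ} (h0 : 0 ≤ l) (h1 : l < 1) :
    distIndicator (E.indicator fun _ => (1 : ℝ)) l = E.indicator fun _ => (1 : ℝ) := by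
  ext x
  by_cases hx : x ∈ E <;> simp [distIndicator_apply, hx, h1, h0]

variable [MeasurableSpace Ω] {μ : Measure Ω}

lemma MeasureTheory.AEStronglyMeasurable.distIndicator {f : Ω → ℝ}
    (hf : AEStronglyMeasurable f μ) (l : ℝ) :
    AEStronglyMeasurable (distIndicator f l) μ := by
  obtain ⟨g, hg, hfg⟩ := hf
  refine ⟨_root_.distIndicator g l, ?_, ?_⟩
  · exact (measurable_const.indicator
      (measurableSet_lt measurable_const hg.measurable.abs)).stronglyMeasurable
  · filter_upwards [hfg] with x hx
    simp only [distIndicator_apply, hx]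

lemma ae_eq_zero_of_forall_ae_abs_le {f : Ω → ℝ} (h : ∀ l : ℝ, 0 < l → ∀ᵐ x ∂μ, |f x| ≤ l) :
    f =ᵐ[μ] 0 := by
  have hall : ∀ᵐ x ∂μ, ∀ n : ℕ, |f x| ≤ 1 / (n + 1) :=
    ae_all_iff.2 fun n => h _ Nat.one_div_pos_of_nat
  filter_upwards [hall] with x hx
  exact abs_nonpos_iff.1 (ge_of_tendsto' tendsto_one_div_add_atTop_nhds_zero_nat hx)

end distIndicator

namespace QBFS

variable {Ω : Type*} [MeasurableSpace Ω] {μ : Measure Ω} (X : QBFS Ω μ) {f g : Ω → ℝ}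

lemma zero_mem_and_norm_zero (hf : X.mem f) : X.mem 0 ∧ X.norm 0 = 0 := by
  have h0 : (0 : Ω → ℝ) = (0 : ℝ) • f := (zero_smul ℝ f).symm
  rw [h0, X.norm_smul 0 f hf, abs_zero, zero_mul]
  exact ⟨X.smul_mem 0 f hf, rfl⟩

lemma mem_and_norm_le_of_nonneg_of_le (hf : X.mem f) (hg : AEStronglyMeasurable g μ)
    (hle : ∀ᵐ x ∂μ, 0 ≤ g x ∧ g x ≤ f x) : X.mem g ∧ X.norm g ≤ X.norm f :=
  X.ideal f g hf hg (hle.mono fun _ h => abs_le_abs h.2 (by linarith [h.1]))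

lemma mem_distIndicator_and_mul_norm_le (hf : X.mem f) {l : ℝ} (hl : 0 < l) :
    X.mem (distIndicator f l) ∧ l * X.norm (distIndicator f l) ≤ X.norm f := by
  have hle : ∀ᵐ x ∂μ, |(l • distIndicator f l) x| ≤ |f x| := by
    refine Eventually.of_forall fun x => ?_
    simp only [Pi.smul_apply, smul_eq_mul, distIndicator_apply]
    split_ifs with h
    · simpa [abs_of_pos hl] using h.le
    · simp
  obtain ⟨hm, hn⟩ := X.ideal f _ hf
    (((X.aestronglyMeasurable f hf).distIndicator l).const_smul l) hle
  have hmem : X.mem (distIndicator f l) := by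
    simpa [smul_smul, inv_mul_cancel₀ hl.ne'] using X.smul_mem l⁻¹ _ hm
  rw [X.norm_smul l _ hmem, abs_of_pos hl] at hn
  exact ⟨hmem, hn⟩

lemma mul_norm_le_wNorm (hf : wMem X f) {l : ℝ} (hl : 0 < l) :
    l * X.norm (distIndicator f l) ≤ wNorm X f :=
  le_csSup hf.2.2 ⟨l, hl, rfl⟩

lemma wMem_and_wNorm_le_of_forall (hf : AEStronglyMeasurable f μ) {C : ℝ}
    (h : ∀ l : ℝ, 0 < l → X.mem (distIndicator f l) ∧ l * X.norm (distIndicator f l) ≤ C) :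
    wMem X f ∧ wNorm X f ≤ C := by
  have hC : ∀ c ∈ {c : ℝ | ∃ l : ℝ, 0 < l ∧ c = l * X.norm (distIndicator f l)}, c ≤ C := by
    rintro _ ⟨l, hl, rfl⟩
    exact (h l hl).2
  exact ⟨⟨hf, fun l hl => (h l hl).1, C, hC⟩, csSup_le ⟨_, 1, one_pos, rfl⟩ hC⟩

lemma wNorm_nonneg (hf : wMem X f) : 0 ≤ wNorm X f :=
  (mul_nonneg zero_le_one (X.norm_nonneg _ (hf.2.1 1 one_pos))).trans
    (X.mul_norm_le_wNorm hf one_pos)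

lemma wMem_and_wNorm_le_norm (hf : X.mem f) : wMem X f ∧ wNorm X f ≤ X.norm f :=
  X.wMem_and_wNorm_le_of_forall (X.aestronglyMeasurable f hf) fun _ hl =>
    X.mem_distIndicator_and_mul_norm_le hf hl

lemma wMem_and_wNorm_le_of_ae_abs_le (hf : wMem X f) (hg : AEStronglyMeasurable g μ)
    (hle : ∀ᵐ x ∂μ, |g x| ≤ |f x|) : wMem X g ∧ wNorm X g ≤ wNorm X f := by
  refine X.wMem_and_wNorm_le_of_forall hg fun l hl => ?_
  obtain ⟨hm, hn⟩ := X.mem_and_norm_le_of_nonneg_of_le (hf.2.1 l hl) (hg.distIndicator l)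
    (hle.mono fun x hx => ⟨distIndicator_nonneg g l x, distIndicator_le_of_abs_le hx l⟩)
  exact ⟨hm, (mul_le_mul_of_nonneg_left hn hl.le).trans (X.mul_norm_le_wNorm hf hl)⟩

lemma wMem_smul_and_wNorm_smul_le (c : ℝ) (hf : wMem X f) :
    wMem X (c • f) ∧ wNorm X (c • f) ≤ |c| * wNorm X f := by
  refine X.wMem_and_wNorm_le_of_forall (hf.1.const_smul c) fun l hl => ?_
  rcases eq_or_ne c 0 with rfl | hc
  · have hzero : distIndicator (0 : Ω → ℝ) l = 0 := by
      ext x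
      simp [distIndicator_apply, hl.le]
    obtain ⟨hm, hn⟩ := X.zero_mem_and_norm_zero (hf.2.1 l hl)
    rw [zero_smul, hzero, hn, mul_zero, abs_zero, zero_mul]
    exact ⟨hm, le_rfl⟩
  · have hcl : 0 < l / |c| := div_pos hl (abs_pos.2 hc)
    refine ⟨by rw [distIndicator_smul hc]; exact hf.2.1 _ hcl, ?_⟩
    calc l * X.norm (distIndicator (c • f) l)
        = |c| * (l / |c| * X.norm (distIndicator f (l / |c|))) := by
          rw [distIndicator_smul hc, ← mul_assoc, mul_div_cancel₀ _ (abs_ne_zero.2 hc)]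
      _ ≤ |c| * wNorm X f := mul_le_mul_of_nonneg_left (X.mul_norm_le_wNorm hf hcl) (abs_nonneg c)

lemma wNorm_smul (c : ℝ) (hf : wMem X f) : wNorm X (c • f) = |c| * wNorm X f := by
  obtain ⟨hcf, hle⟩ := X.wMem_smul_and_wNorm_smul_le c hf
  refine le_antisymm hle ?_
  rcases eq_or_ne c 0 with rfl | hc
  · simpa using X.wNorm_nonneg hcf
  · have hinv := (X.wMem_smul_and_wNorm_smul_le c⁻¹ hcf).2
    rw [smul_smul, inv_mul_cancel₀ hc, one_smul, abs_inv] at hinv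
    rwa [← le_inv_mul_iff₀ (abs_pos.2 hc)]

lemma wMem_add_and_wNorm_add_le (hf : wMem X f) (hg : wMem X g) :
    wMem X (f + g) ∧ wNorm X (f + g) ≤ 2 * X.K * (wNorm X f + wNorm X g) := by
  refine X.wMem_and_wNorm_le_of_forall (hf.1.add hg.1) fun l hl => ?_
  have hl2 : 0 < l / 2 := half_pos hl
  have hmf := hf.2.1 _ hl2
  have hmg := hg.2.1 _ hl2
  obtain ⟨hm, hn⟩ := X.mem_and_norm_le_of_nonneg_of_le (X.add_mem _ _ hmf hmg)
    ((hf.1.add hg.1).distIndicator l) (Eventually.of_forall fun x =>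
      ⟨distIndicator_nonneg _ l x, distIndicator_add_le f g l x⟩)
  refine ⟨hm, ?_⟩
  have hK : 0 ≤ 2 * X.K := by linarith [X.one_le_K]
  calc l * X.norm (distIndicator (f + g) l)
      ≤ l * (X.K * (X.norm (distIndicator f (l / 2)) + X.norm (distIndicator g (l / 2)))) :=
        mul_le_mul_of_nonneg_left (hn.trans (X.quasi_triangle _ _ hmf hmg)) hl.le
    _ = 2 * X.K * (l / 2 * X.norm (distIndicator f (l / 2))
          + l / 2 * X.norm (distIndicator g (l / 2))) := by ring
    _ ≤ 2 * X.K * (wNorm X f + wNorm X g) := mul_le_mul_of_nonneg_left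
        (add_le_add (X.mul_norm_le_wNorm hf hl2) (X.mul_norm_le_wNorm hg hl2)) hK

lemma wNorm_eq_zero_iff (hf : wMem X f) : wNorm X f = 0 ↔ f =ᵐ[μ] 0 := by
  constructor
  · intro h
    refine ae_eq_zero_of_forall_ae_abs_le fun l hl => ?_
    have hnorm : X.norm (distIndicator f l) = 0 := by
      have hle := X.mul_norm_le_wNorm hf hl
      have hnn : 0 ≤ X.norm (distIndicator f l) := X.norm_nonneg _ (hf.2.1 l hl)
      rw [h] at hle
      nlinarith
    filter_upwards [(X.norm_eq_zero_iff _ (hf.2.1 l hl)).1 hnorm] with x hx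
    by_contra hlt
    simp [not_le.1 hlt] at hx
  · intro h
    have hle := X.wMem_and_wNorm_le_of_ae_abs_le (X.wMem_smul_and_wNorm_smul_le 0 hf).1 hf.1
      (h.mono fun x hx => by simp [hx])
    rw [X.wNorm_smul 0 hf, abs_zero, zero_mul] at hle
    exact le_antisymm hle.2 (X.wNorm_nonneg hf)

lemma wMem_and_wNorm_eq_iSup (f : ℕ → Ω → ℝ) (hmem : ∀ n, wMem X (f n))
    (hmono : ∀ᵐ x ∂μ, ∀ n, 0 ≤ f n x ∧ f n x ≤ f (n + 1) x)
    (hlim : ∀ᵐ x ∂μ, Tendsto (fun n => f n x) atTop (𝓝 (g x)))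
    (hg : AEStronglyMeasurable g μ) (hbdd : BddAbove (Set.range fun n => wNorm X (f n))) :
    wMem X g ∧ wNorm X g = ⨆ n, wNorm X (f n) := by
  have hle : ∀ᵐ x ∂μ, ∀ n, 0 ≤ f n x ∧ |f n x| ≤ |f (n + 1) x| ∧ |f n x| ≤ |g x| := by
    filter_upwards [hmono, hlim] with x hx hxlim n
    have hfg : f n x ≤ g x :=
      (monotone_nat_of_le_succ fun n => (hx n).2).ge_of_tendsto hxlim n
    rw [abs_of_nonneg (hx n).1, abs_of_nonneg (hx (n + 1)).1]
    exact ⟨(hx n).1, (hx n).2, hfg.trans (le_abs_self _)⟩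
  have hlevel : ∀ l : ℝ, 0 < l → X.mem (distIndicator g l) ∧
      l * X.norm (distIndicator g l) ≤ ⨆ n, wNorm X (f n) := by
    intro l hl
    have hnorm_le : ∀ n, l * X.norm (distIndicator (f n) l) ≤ ⨆ n, wNorm X (f n) := fun n =>
      (X.mul_norm_le_wNorm (hmem n) hl).trans (le_ciSup hbdd n)
    obtain ⟨hm, hn⟩ := X.fatou (fun n => distIndicator (f n) l) (distIndicator g l)
      (fun n => (hmem n).2.1 l hl)
      (hle.mono fun x hx n => ⟨distIndicator_nonneg _ l x,
        distIndicator_le_of_abs_le (hx n).2.1 l⟩)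
      (by filter_upwards [hlim, hle] with x hxlim hx
          exact tendsto_distIndicator_apply hxlim (fun n => (hx n).2.2) l)
      (hg.distIndicator l)
      ⟨(⨆ n, wNorm X (f n)) / l, by
        rintro _ ⟨n, rfl⟩
        rw [le_div_iff₀' hl]
        exact hnorm_le n⟩
    rw [hn, Real.mul_iSup_of_nonneg hl.le]
    exact ⟨hm, ciSup_le hnorm_le⟩
  obtain ⟨hwg, hgle⟩ := X.wMem_and_wNorm_le_of_forall hg hlevel
  refine ⟨hwg, hgle.antisymm (ciSup_le fun n => ?_)⟩
  exact (X.wMem_and_wNorm_le_of_ae_abs_le hwg (hmem n).1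
    (hle.mono fun x hx => (hx n).2.2)).2

noncomputable def weak : QBFS Ω μ where
  mem := wMem X
  norm := wNorm X
  K := 2 * X.K
  one_le_K := by linarith [X.one_le_K]
  norm_nonneg _ := X.wNorm_nonneg
  aestronglyMeasurable _ hf := hf.1
  add_mem _ _ hf hg := (X.wMem_add_and_wNorm_add_le hf hg).1
  quasi_triangle _ _ hf hg := (X.wMem_add_and_wNorm_add_le hf hg).2
  smul_mem c _ hf := (X.wMem_smul_and_wNorm_smul_le c hf).1
  norm_smul c _ hf := X.wNorm_smul c hf
  norm_eq_zero_iff _ hf := X.wNorm_eq_zero_iff hf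
  ideal _ _ hf hg hle := X.wMem_and_wNorm_le_of_ae_abs_le hf hg hle
  fatou f _ hmem hmono hlim hg hbdd := X.wMem_and_wNorm_eq_iSup f hmem hmono hlim hg hbdd
  saturation E hE hμE := by
    obtain ⟨F, hFE, hF, hμF, hFmem⟩ := X.saturation E hE hμE
    exact ⟨F, hFE, hF, hμF, (X.wMem_and_wNorm_le_norm hFmem).1⟩

lemma wNorm_indicator_one {E : Set Ω} (hE : X.mem (E.indicator fun _ => (1 : ℝ))) :
    wNorm X (E.indicator fun _ => (1 : ℝ)) = X.norm (E.indicator fun _ => (1 : ℝ)) := by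
  obtain ⟨hw, hle⟩ := X.wMem_and_wNorm_le_norm hE
  refine hle.antisymm (le_of_tendsto (f := fun l : ℝ => l * X.norm (E.indicator fun _ => 1))
    (x := 𝓝[<] 1) ?_ ?_)
  · exact ((continuous_id.mul continuous_const).tendsto' 1 _ (one_mul _)).mono_left
      nhdsWithin_le_nhds
  · filter_upwards [Ioo_mem_nhdsLT zero_lt_one] with l hl
    simpa [distIndicator_indicator_one hl.1.le hl.2] using X.mul_norm_le_wNorm hw hl.1

end QBFS

theorem statement19_general {Ω : Type*} [MeasurableSpace Ω] {μ : Measure Ω}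
    (X : QBFS Ω μ) :
    (∃ Y : QBFS Ω μ, Y.mem = wMem X ∧ Y.norm = wNorm X) ∧
    (∀ f, X.mem f → wMem X f ∧ wNorm X f ≤ X.norm f) ∧
    (∀ E : Set Ω, MeasurableSet E → X.mem (E.indicator fun _ => (1 : ℝ)) →
      wNorm X (E.indicator fun _ => (1 : ℝ)) = X.norm (E.indicator fun _ => (1 : ℝ))) :=
  ⟨⟨X.weak, rfl, rfl⟩, fun _ => X.wMem_and_wNorm_le_norm, fun _ _ => X.wNorm_indicator_one⟩

/-- For a quasi-Banach function space `X`, the weak space `wX` is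
again a quasi-Banach function space, `X ⊆ wX` with `‖f‖_{wX} ≤ ‖f‖_X`, and for any
measurable set `E` (whose indicator lies in `X`) one has `‖1_E‖_{wX} = ‖1_E‖_X`. -/
theorem statement19 {Ω : Type*} [MeasurableSpace Ω] {μ : Measure Ω} [SigmaFinite μ]
    (X : QBFS Ω μ) :
    (∃ Y : QBFS Ω μ, Y.mem = wMem X ∧ Y.norm = wNorm X) ∧
    (∀ f, X.mem f → wMem X f ∧ wNorm X f ≤ X.norm f) ∧
    (∀ E : Set Ω, MeasurableSet E → X.mem (E.indicator fun _ => (1 : ℝ)) →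
      wNorm X (E.indicator fun _ => (1 : ℝ)) = X.norm (E.indicator fun _ => (1 : ℝ))) :=
  statement19_general X
end
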